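/- arXiv:1602.07077 — 4 statements merged into one kernel-verified Lean document; each statement's English description precedes it below -/
import Mathlib

section
/- Let $A$ be a (possibly unbounded) self-adjoint operator in a complex Hilbert space $X$ with spectral measure $E_A$, let $\{m_n\}$ be a positive sequence satisfying (WGR) with Mandelbrojt function $T$, and let $f\in C^\infty(A)$ satisfy $\|A^n f\|\le c\alpha^n m_n$ for all $n$, for some $c,\alpha>0$. Then $f \in D(T(\tfrac{1}{2\alpha}|A|))$, where $T(\tfrac{1}{2\alpha}|A|) := \int_{\mathbb{R}} T(\tfrac{1}{2\alpha}|\lambda|)\, dE_A(\lambda)$ is defined by the functional calculus. -/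
/-! By Cauchy–Schwarz with the weights `2⁻ⁿ`, `T(x)² ≤ 2 m₀² ∑ₙ (2x²)ⁿ / mₙ²`, a series that
converges by (WGR). At `x = |λ| / (2α)` its `n`-th term is `λ²ⁿ / ((2α²)ⁿ mₙ²)`, whose integral
against `μ f` is `‖Aⁿ f‖² / ((2α²)ⁿ mₙ²) ≤ c² 2⁻ⁿ`; summing over `n` bounds
`∫ T(|λ| / (2α))² dμ_f` by `4 m₀² c²`. -/

open MeasureTheory

variable {X : Type*} [NormedAddCommGroup X] [InnerProductSpace ℂ X] [CompleteSpace X]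

/-- `u` is the sequence of iterates `u n = Aⁿ f` of the (possibly unbounded) operator
`A`; its existence means `f ∈ C^∞(A)`. -/
def IterSeq (A : X →ₗ.[ℂ] X) (f : X) (u : ℕ → X) : Prop :=
  u 0 = f ∧ ∀ n : ℕ, ∃ h : u n ∈ A.domain, A ⟨u n, h⟩ = u (n + 1)

/-- `E` is the projection-valued spectral measure (supported on `ℝ`) of the
self-adjoint operator `A`, `μ f (s) = ⟨E(s) f, f⟩ = ‖E(s) f‖²` the associated scalar
Borel measures, together with the standard facts of the spectral theorem: the domain of
`Aⁿ` consists of the `f` with `λ ↦ λⁿ` in `L²(μ f)` and `‖Aⁿ f‖² = ∫ λ^(2n) dμ f`. -/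
structure IsSpectralMeasureOf (A : X →ₗ.[ℂ] X) (E : Set ℝ → X →L[ℂ] X)
    (μ : X → Measure ℝ) : Prop where
  empty : E ∅ = 0
  univ : E Set.univ = ContinuousLinearMap.id ℂ X
  inter : ∀ s t : Set ℝ, MeasurableSet s → MeasurableSet t →
    E (s ∩ t) = (E s).comp (E t)
  symm : ∀ s : Set ℝ, MeasurableSet s → ∀ f g : X,
    (inner ℂ (E s f) g : ℂ) = inner ℂ f (E s g)
  countably_additive : ∀ s : ℕ → Set ℝ, (∀ n, MeasurableSet (s n)) →
    Pairwise (Function.onFun Disjoint s) → ∀ f : X,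
      HasSum (fun n => E (s n) f) (E (⋃ n, s n) f)
  mu_def : ∀ (f : X) (s : Set ℝ), MeasurableSet s →
    μ f s = ENNReal.ofReal (‖E s f‖ ^ 2)
  mu_univ : ∀ f : X, μ f Set.univ = ENNReal.ofReal (‖f‖ ^ 2)
  dom_iff : ∀ f : X,
    f ∈ A.domain ↔ (∫⁻ l : ℝ, ENNReal.ofReal (l ^ 2) ∂(μ f)) < ⊤
  inner_A_eq : ∀ f : A.domain, (inner ℂ (A f) (f : X) : ℂ) = ∫ l : ℝ, (l : ℂ) ∂(μ f)
  iter_norm : ∀ (f : X) (u : ℕ → X), IterSeq A f u → ∀ n : ℕ,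
    ENNReal.ofReal (‖u n‖ ^ 2) = ∫⁻ l : ℝ, ENNReal.ofReal (l ^ (2 * n)) ∂(μ f)
  iter_dom : ∀ f : X,
    (∀ n : ℕ, (∫⁻ l : ℝ, ENNReal.ofReal (l ^ (2 * n)) ∂(μ f)) < ⊤) →
      ∃ u : ℕ → X, IterSeq A f u

/-- `f ∈ D(F(A))` for a Borel function `F`, i.e. `F ∈ L²(μ f)` where
`μ f = ⟨E_A(·) f, f⟩`. -/
def MemDom (μ : X → Measure ℝ) (F : ℝ → ℝ) (f : X) : Prop :=
  (∫⁻ l : ℝ, ENNReal.ofReal ((F l) ^ 2) ∂(μ f)) < ⊤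

theorem tsum_sq_le_tsum_mul_tsum_of_sq_le_mul {ι : Type*} {r f g : ι → ℝ}
    (hf : Summable f) (hg : Summable g) (hf₀ : ∀ i, 0 ≤ f i) (hg₀ : ∀ i, 0 ≤ g i)
    (h : ∀ i, r i ^ 2 ≤ f i * g i) :
    (∑' i, r i) ^ 2 ≤ (∑' i, f i) * ∑' i, g i := by
  by_cases hr : Summable r
  · refine le_of_tendsto' (hr.hasSum.pow 2) fun s => ?_
    calc (∑ i ∈ s, r i) ^ 2 ≤ (∑ i ∈ s, f i) * ∑ i ∈ s, g i :=
          Finset.sum_sq_le_sum_mul_sum_of_sq_le_mul s (fun i _ => hf₀ i) (fun i _ => hg₀ i)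
            fun i _ => h i
      _ ≤ (∑' i, f i) * ∑' i, g i :=
          mul_le_mul (hf.sum_le_tsum s fun i _ => hf₀ i) (hg.sum_le_tsum s fun i _ => hg₀ i)
            (Finset.sum_nonneg fun i _ => hg₀ i) (tsum_nonneg hf₀)
  · rw [tsum_eq_zero_of_not_summable hr, sq, zero_mul]
    exact mul_nonneg (tsum_nonneg hf₀) (tsum_nonneg hg₀)

theorem summable_pow_div_sq_of_forall_geometric_le {m : ℕ → ℝ}
    (hWGR : ∀ β : ℝ, 0 < β → ∃ c : ℝ, 0 < c ∧ ∀ n : ℕ, c * β ^ n ≤ m n) (y : ℝ) :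
    Summable fun n => y ^ n / m n ^ 2 := by
  obtain ⟨c, hc, hcm⟩ := hWGR (|y| + 1) (by positivity)
  set ρ := |y| / (|y| + 1) ^ 2
  have hρ : ρ < 1 := by
    rw [div_lt_one (by positivity)]
    nlinarith [abs_nonneg y]
  refine .of_norm_bounded ((summable_geometric_of_lt_one (by positivity) hρ).div_const (c ^ 2))
    fun n => ?_
  have hcβ : 0 < c * (|y| + 1) ^ n := by positivity
  calc ‖y ^ n / m n ^ 2‖ = |y| ^ n / m n ^ 2 := by
        rw [Real.norm_eq_abs, abs_div, abs_pow, abs_sq]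
    _ ≤ |y| ^ n / (c * (|y| + 1) ^ n) ^ 2 := by
        gcongr
        exact hcm n
    _ = ρ ^ n / c ^ 2 := by
        rw [div_pow, mul_pow, ← pow_mul, mul_comm n 2, pow_mul]
        field_simp

theorem sq_tsum_pow_div_le {m : ℕ → ℝ}
    (hWGR : ∀ β : ℝ, 0 < β → ∃ c : ℝ, 0 < c ∧ ∀ n : ℕ, c * β ^ n ≤ m n) (x : ℝ) :
    (∑' n, x ^ n / m n) ^ 2 ≤ 2 * ∑' n, (2 * x ^ 2) ^ n / m n ^ 2 := by
  have h := tsum_sq_le_tsum_mul_tsum_of_sq_le_mul (r := fun n => x ^ n / m n)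
    summable_geometric_two (summable_pow_div_sq_of_forall_geometric_le hWGR (2 * x ^ 2))
    (fun n => by positivity) (fun n => by positivity) fun n => le_of_eq <| by
      rw [div_pow, ← mul_div_assoc, ← mul_pow, ← pow_mul, pow_mul']
      congr 2
      ring
  rwa [tsum_geometric_two] at h

theorem ofReal_sq_mandelbrojt_le {m : ℕ → ℝ}
    (hWGR : ∀ β : ℝ, 0 < β → ∃ c : ℝ, 0 < c ∧ ∀ n : ℕ, c * β ^ n ≤ m n)
    {T : ℝ → ℝ} (hT : ∀ l : ℝ, T l = m 0 * ∑' n : ℕ, l ^ n / m n) (α l : ℝ) :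
    ENNReal.ofReal (T (1 / (2 * α) * |l|) ^ 2) ≤
      ENNReal.ofReal (2 * m 0 ^ 2) *
        ∑' n, ENNReal.ofReal (l ^ (2 * n) / ((2 * α ^ 2) ^ n * m n ^ 2)) := by
  set x := 1 / (2 * α) * |l|
  have hx : 2 * x ^ 2 = l ^ 2 / (2 * α ^ 2) := by
    rw [mul_pow, sq_abs]
    ring
  have hterm : ∀ n : ℕ, (2 * x ^ 2) ^ n / m n ^ 2 =
      l ^ (2 * n) / ((2 * α ^ 2) ^ n * m n ^ 2) := fun n => by
    rw [hx, div_pow, ← pow_mul, div_div]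
  have hsum := summable_pow_div_sq_of_forall_geometric_le hWGR (2 * x ^ 2)
  rw [← ENNReal.ofReal_tsum_of_nonneg (fun n => by rw [← hterm]; positivity)
    (hsum.congr hterm), ← ENNReal.ofReal_mul (by positivity), ← tsum_congr hterm]
  refine ENNReal.ofReal_le_ofReal ?_
  calc T x ^ 2 = m 0 ^ 2 * (∑' n, x ^ n / m n) ^ 2 := by rw [hT, mul_pow]
    _ ≤ m 0 ^ 2 * (2 * ∑' n, (2 * x ^ 2) ^ n / m n ^ 2) := by
        gcongr
        exact sq_tsum_pow_div_le hWGR x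
    _ = 2 * m 0 ^ 2 * ∑' n, (2 * x ^ 2) ^ n / m n ^ 2 := by ring

namespace IsSpectralMeasureOf

variable {A : X →ₗ.[ℂ] X} {E : Set ℝ → X →L[ℂ] X} {μ : X → Measure ℝ} {f : X} {u : ℕ → X}

omit [CompleteSpace X] in
theorem lintegral_pow_div (hE : IsSpectralMeasureOf A E μ) (hu : IterSeq A f u) (n : ℕ)
    {K : ℝ} (hK : 0 ≤ K) :
    ∫⁻ l, ENNReal.ofReal (l ^ (2 * n) / K) ∂μ f = ENNReal.ofReal (‖u n‖ ^ 2 / K) := by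
  simp_rw [div_eq_mul_inv, ENNReal.ofReal_mul' (inv_nonneg.2 hK)]
  rw [lintegral_mul_const _ (by fun_prop), hE.iter_norm f u hu n]

end IsSpectralMeasureOf

theorem mem_dom_T_of_carleman_general (A : X →ₗ.[ℂ] X)
    (E : Set ℝ → X →L[ℂ] X) (μ : X → Measure ℝ) (hE : IsSpectralMeasureOf A E μ)
    (m : ℕ → ℝ) (hm : ∀ n, 0 < m n)
    (hWGR : ∀ β : ℝ, 0 < β → ∃ c : ℝ, 0 < c ∧ ∀ n : ℕ, c * β ^ n ≤ m n)
    (T : ℝ → ℝ) (hT : ∀ l : ℝ, T l = m 0 * ∑' n : ℕ, l ^ n / m n)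
    (f : X) (u : ℕ → X) (hu : IterSeq A f u)
    (c α : ℝ) (hα : 0 < α)
    (hbound : ∀ n : ℕ, ‖u n‖ ≤ c * α ^ n * m n) :
    MemDom μ (fun l => T ((1 / (2 * α)) * |l|)) f := by
  have hterm_le : ∀ n : ℕ, ‖u n‖ ^ 2 / ((2 * α ^ 2) ^ n * m n ^ 2) ≤ c ^ 2 * (1 / 2) ^ n := by
    intro n
    calc ‖u n‖ ^ 2 / ((2 * α ^ 2) ^ n * m n ^ 2)
        ≤ (c * α ^ n * m n) ^ 2 / ((2 * α ^ 2) ^ n * m n ^ 2) := by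
          gcongr
          exact hbound n
      _ = c ^ 2 * (1 / 2) ^ n := by
          have := (hm n).ne'
          rw [show (2 * α ^ 2) ^ n = 2 ^ n * (α ^ n) ^ 2 by ring, one_div_pow]
          field_simp
  calc ∫⁻ l, ENNReal.ofReal (T (1 / (2 * α) * |l|) ^ 2) ∂μ f
      ≤ ∫⁻ l, ENNReal.ofReal (2 * m 0 ^ 2) *
          ∑' n, ENNReal.ofReal (l ^ (2 * n) / ((2 * α ^ 2) ^ n * m n ^ 2)) ∂μ f :=
        lintegral_mono fun l => ofReal_sq_mandelbrojt_le hWGR hT α l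
    _ = ENNReal.ofReal (2 * m 0 ^ 2) *
          ∑' n, ENNReal.ofReal (‖u n‖ ^ 2 / ((2 * α ^ 2) ^ n * m n ^ 2)) := by
        rw [lintegral_const_mul _ (by fun_prop), lintegral_tsum fun n => by fun_prop]
        simp_rw [hE.lintegral_pow_div hu _ (by positivity : (0 : ℝ) ≤ (2 * α ^ 2) ^ _ * m _ ^ 2)]
    _ ≤ ENNReal.ofReal (2 * m 0 ^ 2) * ∑' n : ℕ, ENNReal.ofReal (c ^ 2 * (1 / 2) ^ n) := by
        gcongr with n
        exact hterm_le n
    _ < ⊤ := by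
        rw [← ENNReal.ofReal_tsum_of_nonneg (fun n => by positivity)
          (summable_geometric_two.mul_left _)]
        exact ENNReal.mul_lt_top ENNReal.ofReal_lt_top ENNReal.ofReal_lt_top

/-- If `A` is self-adjoint with spectral measure `E`, `{m n}`
satisfies (WGR) with Mandelbrojt function `T`, and `f ∈ C^∞(A)` satisfies
`‖Aⁿ f‖ ≤ c αⁿ m n` for all `n`, then `f ∈ D(T((1/(2α))|A|))`. -/
theorem mem_dom_T_of_carleman (A : X →ₗ.[ℂ] X) (hsa : IsSelfAdjoint A)
    (E : Set ℝ → X →L[ℂ] X) (μ : X → Measure ℝ) (hE : IsSpectralMeasureOf A E μ)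
    (m : ℕ → ℝ) (hm : ∀ n, 0 < m n)
    (hWGR : ∀ β : ℝ, 0 < β → ∃ c : ℝ, 0 < c ∧ ∀ n : ℕ, c * β ^ n ≤ m n)
    (T : ℝ → ℝ) (hT : ∀ l : ℝ, T l = m 0 * ∑' n : ℕ, l ^ n / m n)
    (f : X) (u : ℕ → X) (hu : IterSeq A f u)
    (c α : ℝ) (hc : 0 < c) (hα : 0 < α)
    (hbound : ∀ n : ℕ, ‖u n‖ ≤ c * α ^ n * m n) :
    MemDom μ (fun l => T ((1 / (2 * α)) * |l|)) f :=
  mem_dom_T_of_carleman_general A E μ hE m hm hWGR T hT f u hu c α hα hbound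
end

section
/- Let $A$ be a self-adjoint operator in a complex Hilbert space with spectral measure $E_A$, $\{m_n\}$ a positive sequence satisfying (WGR), and $T$ its Mandelbrojt function. If $f\in D(T(t|A|))$ for some $t>0$, then $f\in C^\infty(A)$ and there is $c>0$ with $\|A^n f\| \le c\, (1/t)^n m_n$ for all $n\in\mathbb{Z}_+$; in particular $f\in C_{\{m_n\}}(A)$. -/
/-!
On the spectral side `f ∈ D(Aⁿ)` and `‖Aⁿ f‖² = ∫ λ²ⁿ dμ_f`. By (WGR) the Mandelbrojt series
`∑ rᵏ / m k` converges for every `r ≥ 0`, so each of its terms is bounded by its sum, which for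
`r = t|λ|` reads `|λ|ⁿ ≤ m n / (m 0 tⁿ) · T(t|λ|)`. Squaring and integrating against `μ_f` bounds
every `∫ λ²ⁿ dμ_f` by `(m n / (m 0 tⁿ))² ‖T(t|A|) f‖²`, which gives both `f ∈ C^∞(A)` and the
estimate.
-/

open MeasureTheory

variable {X : Type*} [NormedAddCommGroup X] [InnerProductSpace ℂ X] [CompleteSpace X]

section MandelbrojtSeries

variable {m : ℕ → ℝ}

/-- Under (WGR) the series `∑ rᵏ / m k` is dominated by a geometric series of ratio
`r / (r + 1)`. -/
theorem summable_pow_div_of_forall_le (hm : ∀ n, 0 < m n)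
    (hWGR : ∀ β : ℝ, 0 < β → ∃ c : ℝ, 0 < c ∧ ∀ n : ℕ, c * β ^ n ≤ m n)
    {r : ℝ} (hr : 0 ≤ r) : Summable fun k : ℕ => r ^ k / m k := by
  obtain ⟨c, hc, hcm⟩ := hWGR (r + 1) (by linarith)
  have hgeo : Summable fun k : ℕ => c⁻¹ * (r / (r + 1)) ^ k :=
    (summable_geometric_of_lt_one (by positivity)
      ((div_lt_one (by linarith)).mpr (by linarith))).mul_left _
  refine hgeo.of_nonneg_of_le (fun k => div_nonneg (by positivity) (hm k).le) fun k => ?_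
  calc r ^ k / m k ≤ r ^ k / (c * (r + 1) ^ k) :=
        div_le_div_of_nonneg_left (by positivity) (by positivity) (hcm k)
    _ = c⁻¹ * (r / (r + 1)) ^ k := by rw [div_pow]; field_simp

theorem pow_le_mul_tsum_pow_div (hm : ∀ n, 0 < m n)
    (hWGR : ∀ β : ℝ, 0 < β → ∃ c : ℝ, 0 < c ∧ ∀ n : ℕ, c * β ^ n ≤ m n)
    {r : ℝ} (hr : 0 ≤ r) (n : ℕ) : r ^ n ≤ m n * ∑' k : ℕ, r ^ k / m k := by
  have hterm : r ^ n / m n ≤ ∑' k : ℕ, r ^ k / m k :=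
    (summable_pow_div_of_forall_le hm hWGR hr).le_tsum n
      fun k _ => div_nonneg (by positivity) (hm k).le
  rw [div_le_iff₀ (hm n)] at hterm
  linarith

theorem abs_pow_le_mul_mandelbrojt (hm : ∀ n, 0 < m n)
    (hWGR : ∀ β : ℝ, 0 < β → ∃ c : ℝ, 0 < c ∧ ∀ n : ℕ, c * β ^ n ≤ m n)
    {T : ℝ → ℝ} (hT : ∀ l : ℝ, T l = m 0 * ∑' n : ℕ, l ^ n / m n)
    {t : ℝ} (ht : 0 < t) (n : ℕ) (l : ℝ) :
    |l| ^ n ≤ m n / (m 0 * t ^ n) * T (t * |l|) := by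
  have h := pow_le_mul_tsum_pow_div hm hWGR (by positivity : 0 ≤ t * |l|) n
  rw [hT, div_mul_eq_mul_div, le_div_iff₀ (by have := hm 0; positivity)]
  calc |l| ^ n * (m 0 * t ^ n) = m 0 * (t * |l|) ^ n := by ring
    _ ≤ m 0 * (m n * ∑' k : ℕ, (t * |l|) ^ k / m k) := by gcongr; exact (hm 0).le
    _ = m n * (m 0 * ∑' k : ℕ, (t * |l|) ^ k / m k) := by ring

end MandelbrojtSeries

theorem lintegral_ofReal_pow_two_mul_le_of_abs_pow_le {ν : Measure ℝ} {F : ℝ → ℝ} {K : ℝ}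
    {n : ℕ} (hF : ∀ l, |l| ^ n ≤ K * F l) :
    ∫⁻ l, ENNReal.ofReal (l ^ (2 * n)) ∂ν ≤
      ENNReal.ofReal (K ^ 2) * ∫⁻ l, ENNReal.ofReal (F l ^ 2) ∂ν := by
  rw [← lintegral_const_mul' _ _ ENNReal.ofReal_ne_top]
  refine lintegral_mono fun l => ?_
  have hpow : l ^ (2 * n) = (|l| ^ n) ^ 2 := by rw [← abs_pow, sq_abs, pow_mul']
  rw [← ENNReal.ofReal_mul (sq_nonneg K), ← mul_pow, hpow]
  exact ENNReal.ofReal_le_ofReal (pow_le_pow_left₀ (by positivity) (hF l) 2)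

theorem abs_le_mul_sqrt_toReal {x K : ℝ} {I : ENNReal} (hK : 0 ≤ K) (hI : I ≠ ⊤)
    (h : ENNReal.ofReal (x ^ 2) ≤ ENNReal.ofReal (K ^ 2) * I) :
    |x| ≤ K * √I.toReal := by
  have h' := ENNReal.toReal_mono (ENNReal.mul_ne_top ENNReal.ofReal_ne_top hI) h
  rw [ENNReal.toReal_ofReal (sq_nonneg x), ENNReal.toReal_mul,
    ENNReal.toReal_ofReal (sq_nonneg K)] at h'
  calc |x| ≤ √(K ^ 2 * I.toReal) := Real.abs_le_sqrt h'
    _ = K * √I.toReal := by rw [Real.sqrt_mul (sq_nonneg K), Real.sqrt_sq hK]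

theorem carleman_of_mem_dom_T_general (A : X →ₗ.[ℂ] X)
    (E : Set ℝ → X →L[ℂ] X) (μ : X → Measure ℝ) (hE : IsSpectralMeasureOf A E μ)
    (m : ℕ → ℝ) (hm : ∀ n, 0 < m n)
    (hWGR : ∀ β : ℝ, 0 < β → ∃ c : ℝ, 0 < c ∧ ∀ n : ℕ, c * β ^ n ≤ m n)
    (T : ℝ → ℝ) (hT : ∀ l : ℝ, T l = m 0 * ∑' n : ℕ, l ^ n / m n)
    (f : X) (t : ℝ) (ht : 0 < t)
    (hf : MemDom μ (fun l => T (t * |l|)) f) :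
    ∃ u : ℕ → X, IterSeq A f u ∧
      ∃ c : ℝ, 0 < c ∧ ∀ n : ℕ, ‖u n‖ ≤ c * (1 / t) ^ n * m n := by
  set I := ∫⁻ l, ENNReal.ofReal (T (t * |l|) ^ 2) ∂(μ f)
  have hm0 := hm 0
  have hK : ∀ n, 0 ≤ m n / (m 0 * t ^ n) := fun n => by have := hm n; positivity
  have hmoment : ∀ n, ∫⁻ l, ENNReal.ofReal (l ^ (2 * n)) ∂(μ f) ≤
      ENNReal.ofReal ((m n / (m 0 * t ^ n)) ^ 2) * I := fun n =>
    lintegral_ofReal_pow_two_mul_le_of_abs_pow_le (abs_pow_le_mul_mandelbrojt hm hWGR hT ht n)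
  obtain ⟨u, hu⟩ := hE.iter_dom f fun n =>
    (hmoment n).trans_lt (ENNReal.mul_lt_top ENNReal.ofReal_lt_top hf)
  refine ⟨u, hu, (√I.toReal + 1) / m 0, by positivity, fun n => ?_⟩
  have hnorm : ‖u n‖ ≤ m n / (m 0 * t ^ n) * √I.toReal := by
    simpa using abs_le_mul_sqrt_toReal (hK n) hf.ne
      ((hE.iter_norm f u hu n).trans_le (hmoment n))
  calc ‖u n‖ ≤ m n / (m 0 * t ^ n) * (√I.toReal + 1) :=
        hnorm.trans (mul_le_mul_of_nonneg_left (le_add_of_nonneg_right zero_le_one) (hK n))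
    _ = (√I.toReal + 1) / m 0 * (1 / t) ^ n * m n := by
        rw [one_div_pow]
        field_simp

/-- If `f ∈ D(T(t|A|))` for some `t > 0`, then `f ∈ C^∞(A)` and
`‖Aⁿ f‖ ≤ c (1/t)ⁿ m n` for all `n`; in particular `f ∈ C_{m_n}(A)`. -/
theorem carleman_of_mem_dom_T (A : X →ₗ.[ℂ] X) (hsa : IsSelfAdjoint A)
    (E : Set ℝ → X →L[ℂ] X) (μ : X → Measure ℝ) (hE : IsSpectralMeasureOf A E μ)
    (m : ℕ → ℝ) (hm : ∀ n, 0 < m n)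
    (hWGR : ∀ β : ℝ, 0 < β → ∃ c : ℝ, 0 < c ∧ ∀ n : ℕ, c * β ^ n ≤ m n)
    (T : ℝ → ℝ) (hT : ∀ l : ℝ, T l = m 0 * ∑' n : ℕ, l ^ n / m n)
    (f : X) (t : ℝ) (ht : 0 < t)
    (hf : MemDom μ (fun l => T (t * |l|)) f) :
    ∃ u : ℕ → X, IterSeq A f u ∧
      ∃ c : ℝ, 0 < c ∧ ∀ n : ℕ, ‖u n‖ ≤ c * (1 / t) ^ n * m n :=
  carleman_of_mem_dom_T_general A E μ hE m hm hWGR T hT f t ht hf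
end

section
/- Let $A$ be a self-adjoint operator in a complex Hilbert space with spectral measure $E_A$ and let $\{m_n\}$ satisfy (WGR) with Mandelbrojt function $T$. Then $C_{\{m_n\}}(A) = \bigcup_{t>0} D(T(t|A|))$ and $C_{(m_n)}(A) = \bigcap_{t>0} D(T(t|A|))$. -/
/-!
For `s ≥ 0` the Mandelbrojt function dominates each of its terms, `m 0 * s ^ n / m n ≤ T s`,
so `|λ| ^ n ≤ m n / (m 0 * t ^ n) * T (t * |λ|)`; integrating the square against the spectral
measure `μ f` bounds `‖Aⁿ f‖` by `t⁻ⁿ m n` times the `L²(μ f)`-norm of `T (t|·|)`.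
Conversely, writing `s ^ k / m k = 2⁻ᵏ * (2 s) ^ k / m k` and bounding each `(2 s) ^ k / m k`
by the `ℓ²`-norm of that sequence gives `T s ^ 2 ≤ 4 m 0 ^ 2 ∑ₖ ((2 s) ^ k / m k) ^ 2`; integrated,
the `k`-th term is `(2 t) ^ (2k) ‖Aᵏ f‖² / m k ^ 2 ≤ c² (2 t α) ^ (2k)`, a convergent geometric
series once `2 t α < 1`. The choices `α = t⁻¹` and `t = (4α)⁻¹` then match the quantifiers over
`α` and `t` in both classes.
-/

open MeasureTheory

variable {X : Type*} [NormedAddCommGroup X] [InnerProductSpace ℂ X] [CompleteSpace X]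

def WGR (m : ℕ → ℝ) : Prop :=
  ∀ β : ℝ, 0 < β → ∃ c : ℝ, 0 < c ∧ ∀ n : ℕ, c * β ^ n ≤ m n

noncomputable def mandelbrojt (m : ℕ → ℝ) (s : ℝ) : ℝ :=
  m 0 * ∑' n : ℕ, s ^ n / m n

lemma summable_sq_of_nonneg {b : ℕ → ℝ} (hb0 : ∀ k, 0 ≤ b k) (hb : Summable b) :
    Summable fun k => b k ^ 2 := by
  refine .of_nonneg_of_le (fun k => sq_nonneg _) (fun k => ?_) (hb.mul_left (∑' k, b k))
  rw [sq]
  exact mul_le_mul_of_nonneg_right (hb.le_tsum k fun j _ => hb0 j) (hb0 k)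

lemma sq_tsum_mul_half_pow_le {b : ℕ → ℝ} (hb0 : ∀ k, 0 ≤ b k)
    (hb : Summable fun k => b k ^ 2) :
    (∑' k, b k * (1 / 2) ^ k) ^ 2 ≤ 4 * ∑' k, b k ^ 2 := by
  set B := ∑' k, b k ^ 2
  have hb_le : ∀ k, b k ≤ √B := fun k =>
    (le_abs_self _).trans (Real.abs_le_sqrt (hb.le_tsum k fun j _ => sq_nonneg (b j)))
  have hdom : ∀ k, b k * (1 / 2) ^ k ≤ √B * (1 / 2) ^ k := fun k =>
    mul_le_mul_of_nonneg_right (hb_le k) (by positivity)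
  have hgeom : Summable fun k : ℕ => √B * (1 / 2 : ℝ) ^ k := summable_geometric_two.mul_left _
  have hsum_le : ∑' k, b k * (1 / 2) ^ k ≤ 2 * √B :=
    calc ∑' k, b k * (1 / 2) ^ k ≤ ∑' k : ℕ, √B * (1 / 2 : ℝ) ^ k :=
          (hgeom.of_nonneg_of_le (fun k => mul_nonneg (hb0 k) (by positivity)) hdom).tsum_le_tsum
            hdom hgeom
      _ = 2 * √B := by rw [tsum_mul_left, tsum_geometric_two, mul_comm]
  calc (∑' k, b k * (1 / 2) ^ k) ^ 2 ≤ (2 * √B) ^ 2 :=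
        pow_le_pow_left₀ (tsum_nonneg fun k => mul_nonneg (hb0 k) (by positivity)) hsum_le 2
    _ = 4 * B := by rw [mul_pow, Real.sq_sqrt (tsum_nonneg fun k => sq_nonneg _)]; ring

namespace WGR

variable {m : ℕ → ℝ}

lemma pos (hm : WGR m) (n : ℕ) : 0 < m n := by
  obtain ⟨c, hc, hcm⟩ := hm 1 one_pos
  exact hc.trans_le (by simpa using hcm n)

lemma summable_pow_div (hm : WGR m) {x : ℝ} (hx : 0 ≤ x) : Summable fun n => x ^ n / m n := by
  obtain ⟨c, hc, hcm⟩ := hm (x + 1) (by linarith)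
  have hratio : x / (x + 1) < 1 := (div_lt_one (by linarith)).2 (by linarith)
  refine ((summable_geometric_of_lt_one (by positivity) hratio).mul_left c⁻¹).of_nonneg_of_le
    (fun n => div_nonneg (pow_nonneg hx n) (hm.pos n).le) fun n => ?_
  calc x ^ n / m n ≤ x ^ n / (c * (x + 1) ^ n) :=
        div_le_div_of_nonneg_left (pow_nonneg hx n) (by positivity) (hcm n)
    _ = c⁻¹ * (x / (x + 1)) ^ n := by rw [div_pow]; field_simp

lemma summable_sq_pow_div (hm : WGR m) {x : ℝ} (hx : 0 ≤ x) :
    Summable fun n => (x ^ n / m n) ^ 2 :=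
  summable_sq_of_nonneg (fun n => div_nonneg (pow_nonneg hx n) (hm.pos n).le)
    (hm.summable_pow_div hx)

lemma pow_le_mandelbrojt (hm : WGR m) {s : ℝ} (hs : 0 ≤ s) (n : ℕ) :
    s ^ n ≤ m n / m 0 * mandelbrojt m s := by
  have hterm : s ^ n / m n ≤ ∑' k, s ^ k / m k :=
    (hm.summable_pow_div hs).le_tsum n fun k _ => div_nonneg (pow_nonneg hs k) (hm.pos k).le
  rw [mandelbrojt, ← mul_assoc, div_mul_cancel₀ _ (hm.pos 0).ne']
  rwa [div_le_iff₀' (hm.pos n)] at hterm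

lemma mandelbrojt_sq_le (hm : WGR m) {s : ℝ} (hs : 0 ≤ s) :
    mandelbrojt m s ^ 2 ≤ 4 * m 0 ^ 2 * ∑' k, ((2 * s) ^ k / m k) ^ 2 := by
  have hsplit : ∀ k, s ^ k / m k = (2 * s) ^ k / m k * (1 / 2) ^ k := fun k => by
    rw [div_mul_eq_mul_div, ← mul_pow]; ring_nf
  have hsq := sq_tsum_mul_half_pow_le
    (fun k => div_nonneg (pow_nonneg (by positivity) k) (hm.pos k).le)
    (hm.summable_sq_pow_div (x := 2 * s) (by positivity))
  rw [mandelbrojt, mul_pow, tsum_congr hsplit]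
  calc m 0 ^ 2 * (∑' k, (2 * s) ^ k / m k * (1 / 2) ^ k) ^ 2
      ≤ m 0 ^ 2 * (4 * ∑' k, ((2 * s) ^ k / m k) ^ 2) :=
        mul_le_mul_of_nonneg_left hsq (sq_nonneg _)
    _ = _ := by ring

lemma lintegral_pow_le (hm : WGR m) (ν : Measure ℝ) {t : ℝ} (ht : 0 < t) (n : ℕ) :
    ∫⁻ l, ENNReal.ofReal (l ^ (2 * n)) ∂ν ≤
      ENNReal.ofReal ((m n / (m 0 * t ^ n)) ^ 2) *
        ∫⁻ l, ENNReal.ofReal (mandelbrojt m (t * |l|) ^ 2) ∂ν := by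
  rw [← lintegral_const_mul' _ _ ENNReal.ofReal_ne_top]
  refine lintegral_mono fun l => ?_
  rw [← ENNReal.ofReal_mul (sq_nonneg _), ← mul_pow]
  refine ENNReal.ofReal_le_ofReal ?_
  have habs : |l| ^ n ≤ m n / (m 0 * t ^ n) * mandelbrojt m (t * |l|) := by
    have h := hm.pow_le_mandelbrojt (s := t * |l|) (by positivity) n
    rw [mul_pow, ← le_div_iff₀' (by positivity)] at h
    exact h.trans_eq (by ring)
  calc l ^ (2 * n) = (|l| ^ n) ^ 2 := by rw [pow_mul, ← sq_abs l]; ring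
    _ ≤ _ := pow_le_pow_left₀ (by positivity) habs 2

lemma lintegral_mandelbrojt_sq_le (hm : WGR m) (ν : Measure ℝ) {t : ℝ} (ht : 0 ≤ t) :
    ∫⁻ l, ENNReal.ofReal (mandelbrojt m (t * |l|) ^ 2) ∂ν ≤
      ENNReal.ofReal (4 * m 0 ^ 2) * ∑' k, ENNReal.ofReal (((2 * t) ^ k / m k) ^ 2) *
        ∫⁻ l, ENNReal.ofReal (l ^ (2 * k)) ∂ν := by
  have hpoint : ∀ l : ℝ, ENNReal.ofReal (mandelbrojt m (t * |l|) ^ 2) ≤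
      ENNReal.ofReal (4 * m 0 ^ 2) *
        ∑' k, ENNReal.ofReal (((2 * t) ^ k / m k) ^ 2) * ENNReal.ofReal (l ^ (2 * k)) := by
    intro l
    have hterm : ∀ k, ((2 * (t * |l|)) ^ k / m k) ^ 2 = ((2 * t) ^ k / m k) ^ 2 * l ^ (2 * k) :=
      fun k => by rw [pow_mul, ← sq_abs l]; ring
    calc ENNReal.ofReal (mandelbrojt m (t * |l|) ^ 2)
        ≤ ENNReal.ofReal (4 * m 0 ^ 2 * ∑' k, ((2 * (t * |l|)) ^ k / m k) ^ 2) :=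
          ENNReal.ofReal_le_ofReal (hm.mandelbrojt_sq_le (by positivity))
      _ = _ := by
          rw [ENNReal.ofReal_mul (by positivity), ENNReal.ofReal_tsum_of_nonneg
            (fun k => sq_nonneg _) (hm.summable_sq_pow_div (by positivity))]
          simp_rw [hterm, ENNReal.ofReal_mul (sq_nonneg _)]
  calc ∫⁻ l, ENNReal.ofReal (mandelbrojt m (t * |l|) ^ 2) ∂ν
      ≤ ∫⁻ l, ENNReal.ofReal (4 * m 0 ^ 2) *
          ∑' k, ENNReal.ofReal (((2 * t) ^ k / m k) ^ 2) * ENNReal.ofReal (l ^ (2 * k)) ∂ν :=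
        lintegral_mono hpoint
    _ = _ := by
        rw [lintegral_const_mul' _ _ ENNReal.ofReal_ne_top, lintegral_tsum fun k => by fun_prop]
        simp_rw [lintegral_const_mul' _ _ ENNReal.ofReal_ne_top]

end WGR

namespace IsSpectralMeasureOf

omit [CompleteSpace X]

variable {A : X →ₗ.[ℂ] X} {E : Set ℝ → X →L[ℂ] X} {μ : X → Measure ℝ} {m : ℕ → ℝ} {f : X}
  {t : ℝ}

lemma exists_iterSeq_of_memDom (hE : IsSpectralMeasureOf A E μ) (hm : WGR m) (ht : 0 < t)
    (hf : MemDom μ (fun l => mandelbrojt m (t * |l|)) f) : ∃ u, IterSeq A f u :=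
  hE.iter_dom f fun n =>
    (hm.lintegral_pow_le (μ f) ht n).trans_lt (ENNReal.mul_lt_top ENNReal.ofReal_lt_top hf)

lemma norm_iterate_le_of_memDom (hE : IsSpectralMeasureOf A E μ) (hm : WGR m) (ht : 0 < t)
    (hf : MemDom μ (fun l => mandelbrojt m (t * |l|)) f) :
    ∃ c, 0 < c ∧ ∀ u, IterSeq A f u → ∀ n, ‖u n‖ ≤ c * t⁻¹ ^ n * m n := by
  set M := (∫⁻ l, ENNReal.ofReal (mandelbrojt m (t * |l|) ^ 2) ∂μ f).toReal
  have hm0 := hm.pos 0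
  refine ⟨√M / m 0 + 1, by positivity, fun u hu n => ?_⟩
  have hsq : ‖u n‖ ^ 2 ≤ (√M / m 0 * t⁻¹ ^ n * m n) ^ 2 := by
    have h := (hE.iter_norm f u hu n).trans_le (hm.lintegral_pow_le (μ f) ht n)
    rw [← ENNReal.ofReal_toReal hf.ne, ← ENNReal.ofReal_mul (sq_nonneg _),
      ENNReal.ofReal_le_ofReal_iff (by positivity)] at h
    beta_reduce at h
    refine h.trans_eq ?_
    rw [mul_pow _ (m n), mul_pow (√M / m 0), div_pow √M, Real.sq_sqrt ENNReal.toReal_nonneg,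
      inv_pow]
    field_simp
  calc ‖u n‖ ≤ √M / m 0 * t⁻¹ ^ n * m n :=
        le_of_pow_le_pow_left₀ two_ne_zero (by positivity [hm.pos n]) hsq
    _ ≤ (√M / m 0 + 1) * t⁻¹ ^ n * m n := by
        gcongr
        · exact (hm.pos n).le
        · exact le_add_of_nonneg_right zero_le_one

lemma memDom_of_norm_iterate_le (hE : IsSpectralMeasureOf A E μ) (hm : WGR m) {u : ℕ → X}
    (hu : IterSeq A f u) {c α : ℝ} (hb : ∀ n, ‖u n‖ ≤ c * α ^ n * m n) (ht : 0 ≤ t)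
    (hα : 0 ≤ α) (htα : 2 * t * α < 1) :
    MemDom μ (fun l => mandelbrojt m (t * |l|)) f := by
  have hterm : ∀ k, ENNReal.ofReal (((2 * t) ^ k / m k) ^ 2) *
      ∫⁻ l, ENNReal.ofReal (l ^ (2 * k)) ∂μ f ≤ ENNReal.ofReal (c ^ 2 * ((2 * t * α) ^ 2) ^ k) := by
    intro k
    rw [← hE.iter_norm f u hu k, ← ENNReal.ofReal_mul (sq_nonneg _)]
    refine ENNReal.ofReal_le_ofReal ?_
    calc ((2 * t) ^ k / m k) ^ 2 * ‖u k‖ ^ 2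
        ≤ ((2 * t) ^ k / m k) ^ 2 * (c * α ^ k * m k) ^ 2 := by gcongr; exact hb k
      _ = c ^ 2 * ((2 * t * α) ^ 2) ^ k := by
          rw [← pow_mul, mul_comm 2 k, pow_mul]
          field_simp [(hm.pos k).ne']
          ring
  have hgeom : Summable fun k : ℕ => c ^ 2 * ((2 * t * α) ^ 2) ^ k :=
    (summable_geometric_of_lt_one (sq_nonneg _)
      (pow_lt_one₀ (by positivity) htα two_ne_zero)).mul_left _
  refine (hm.lintegral_mandelbrojt_sq_le (μ f) ht).trans_lt
    (ENNReal.mul_lt_top ENNReal.ofReal_lt_top ?_)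
  calc _ ≤ ∑' k, ENNReal.ofReal (c ^ 2 * ((2 * t * α) ^ 2) ^ k) := ENNReal.tsum_le_tsum hterm
    _ = ENNReal.ofReal (∑' k, c ^ 2 * ((2 * t * α) ^ 2) ^ k) :=
        (ENNReal.ofReal_tsum_of_nonneg (fun k => by positivity) hgeom).symm
    _ < ⊤ := ENNReal.ofReal_lt_top

end IsSpectralMeasureOf

theorem carleman_classes_eq_dom_T_general (A : X →ₗ.[ℂ] X)
    (E : Set ℝ → X →L[ℂ] X) (μ : X → Measure ℝ) (hE : IsSpectralMeasureOf A E μ)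
    (m : ℕ → ℝ)
    (hWGR : ∀ β : ℝ, 0 < β → ∃ c : ℝ, 0 < c ∧ ∀ n : ℕ, c * β ^ n ≤ m n)
    (T : ℝ → ℝ) (hT : ∀ l : ℝ, T l = m 0 * ∑' n : ℕ, l ^ n / m n) :
    {f : X | ∃ u : ℕ → X, IterSeq A f u ∧
        ∃ α : ℝ, 0 < α ∧ ∃ c : ℝ, 0 < c ∧ ∀ n : ℕ, ‖u n‖ ≤ c * α ^ n * m n} =
      {f : X | ∃ t : ℝ, 0 < t ∧ MemDom μ (fun l => T (t * |l|)) f} ∧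
    {f : X | ∃ u : ℕ → X, IterSeq A f u ∧
        ∀ α : ℝ, 0 < α → ∃ c : ℝ, 0 < c ∧ ∀ n : ℕ, ‖u n‖ ≤ c * α ^ n * m n} =
      {f : X | ∀ t : ℝ, 0 < t → MemDom μ (fun l => T (t * |l|)) f} := by
  obtain rfl : T = mandelbrojt m := funext hT
  constructor
  · ext f
    constructor
    · rintro ⟨u, hu, α, hα, c, -, hb⟩
      exact ⟨(4 * α)⁻¹, by positivity, hE.memDom_of_norm_iterate_le hWGR hu hb (by positivity)
        hα.le (by field_simp; norm_num)⟩
    · rintro ⟨t, ht, hf⟩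
      obtain ⟨u, hu⟩ := hE.exists_iterSeq_of_memDom hWGR ht hf
      obtain ⟨c, hc, hb⟩ := hE.norm_iterate_le_of_memDom hWGR ht hf
      exact ⟨u, hu, t⁻¹, inv_pos.2 ht, c, hc, hb u hu⟩
  · ext f
    constructor
    · rintro ⟨u, hu, hb⟩ t ht
      obtain ⟨c, -, hc⟩ := hb (4 * t)⁻¹ (by positivity)
      exact hE.memDom_of_norm_iterate_le hWGR hu hc ht.le (by positivity) (by field_simp; norm_num)
    · intro hf
      obtain ⟨u, hu⟩ := hE.exists_iterSeq_of_memDom hWGR one_pos (hf 1 one_pos)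
      refine ⟨u, hu, fun α hα => ?_⟩
      obtain ⟨c, hc, hb⟩ := hE.norm_iterate_le_of_memDom hWGR (inv_pos.2 hα) (hf _ (inv_pos.2 hα))
      exact ⟨c, hc, by simpa only [inv_inv] using hb u hu⟩

/-- For a self-adjoint `A` and `{m n}` satisfying (WGR) with
Mandelbrojt function `T`: `C_{m_n}(A) = ⋃_{t>0} D(T(t|A|))` and
`C_(m_n)(A) = ⋂_{t>0} D(T(t|A|))`. -/
theorem carleman_classes_eq_dom_T (A : X →ₗ.[ℂ] X) (hsa : IsSelfAdjoint A)
    (E : Set ℝ → X →L[ℂ] X) (μ : X → Measure ℝ) (hE : IsSpectralMeasureOf A E μ)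
    (m : ℕ → ℝ) (hm : ∀ n, 0 < m n)
    (hWGR : ∀ β : ℝ, 0 < β → ∃ c : ℝ, 0 < c ∧ ∀ n : ℕ, c * β ^ n ≤ m n)
    (T : ℝ → ℝ) (hT : ∀ l : ℝ, T l = m 0 * ∑' n : ℕ, l ^ n / m n) :
    {f : X | ∃ u : ℕ → X, IterSeq A f u ∧
        ∃ α : ℝ, 0 < α ∧ ∃ c : ℝ, 0 < c ∧ ∀ n : ℕ, ‖u n‖ ≤ c * α ^ n * m n} =
      {f : X | ∃ t : ℝ, 0 < t ∧ MemDom μ (fun l => T (t * |l|)) f} ∧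
    {f : X | ∃ u : ℕ → X, IterSeq A f u ∧
        ∀ α : ℝ, 0 < α → ∃ c : ℝ, 0 < c ∧ ∀ n : ℕ, ‖u n‖ ≤ c * α ^ n * m n} =
      {f : X | ∀ t : ℝ, 0 < t → MemDom μ (fun l => T (t * |l|)) f} :=
  carleman_classes_eq_dom_T_general A E μ hE m hWGR T hT
end

section
/- Let $A$ be a self-adjoint operator in a complex Hilbert space and $\beta>0$. Then the Gevrey class of order $\beta$ satisfies $\mathcal{E}^{\{\beta\}}(A) = \bigcup_{t>0} D(e^{t|A|^{1/\beta}})$ and $\mathcal{E}^{(\beta)}(A) = \bigcap_{t>0} D(e^{t|A|^{1/\beta}})$, where the operators $e^{t|A|^{1/\beta}}$ are defined by the Borel functional calculus. -/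
/-!
Both classes are read off the scalar spectral measure `μ f`, since `‖Aⁿ f‖² = ∫ λ²ⁿ dμ f` and
`f ∈ D(e^{t|A|^{1/β}})` means `∫ e^{2t|λ|^{1/β}} dμ f < ∞`. The bridge is the comparison of
`(n!)^β` with `e^{λ^{1/β}}`. From `xⁿ/n! ≤ eˣ` we get `λⁿ ≤ ((β/t)^β)ⁿ (n!)^β e^{tλ^{1/β}}`,
so the exponential integrability bounds every moment. Conversely `eˣ ≤ e (ex)ⁿ/n!` for
`n = ⌊x⌋` dominates `e^{tλ^{1/β}}` by the single term `e^β ((et/β)^β)ⁿ λⁿ/(n!)^β`; under the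
moment bounds `∫ λ²ⁿ dμ f ≤ (c αⁿ (n!)^β)²` the squares of these terms have integrals
`≤ (e^β c)² q²ⁿ` with `q = (et/β)^β α`, which are summable once `q < 1`.
-/

open MeasureTheory

variable {X : Type*} [NormedAddCommGroup X] [InnerProductSpace ℂ X] [CompleteSpace X]

open Real
open scoped Nat

lemma mul_rpow_one_div_rpow {β c x : ℝ} (hβ : β ≠ 0) (hc : 0 ≤ c) (hx : 0 ≤ x) :
    (c * x ^ (1 / β)) ^ β = c ^ β * x := by
  rw [mul_rpow hc (by positivity), one_div, rpow_inv_rpow hx hβ]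

lemma exp_le_exp_one_mul_pow_floor_div_factorial {x : ℝ} (hx : 0 ≤ x) :
    exp x ≤ exp 1 * (exp 1 * x) ^ ⌊x⌋₊ / (⌊x⌋₊ ! : ℝ) := by
  set n := ⌊x⌋₊
  have hfact : (n ! : ℝ) ≤ x ^ n := calc
    (n ! : ℝ) ≤ (n : ℝ) ^ n := mod_cast n.factorial_le_pow
    _ ≤ x ^ n := pow_le_pow_left₀ n.cast_nonneg (Nat.floor_le hx) n
  calc exp x ≤ exp 1 * exp 1 ^ n := by
        rw [exp_one_pow, ← exp_add, exp_le_exp]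
        linarith [Nat.lt_floor_add_one x]
    _ ≤ exp 1 * exp 1 ^ n * (x ^ n / n !) :=
      le_mul_of_one_le_right (by positivity) ((one_le_div (by positivity)).2 hfact)
    _ = _ := by ring

lemma pow_le_factorial_rpow_mul_exp {β t x : ℝ} (hβ : 0 < β) (ht : 0 < t) (hx : 0 ≤ x)
    (n : ℕ) : x ^ n ≤ ((β / t) ^ β) ^ n * (n ! : ℝ) ^ β * exp (t * x ^ (1 / β)) := by
  set y := t / β * x ^ (1 / β)
  have hy : 0 ≤ y := by positivity
  have key : (y ^ n / n !) ^ β ≤ exp y ^ β :=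
    rpow_le_rpow (by positivity) (pow_div_factorial_le_exp y hy n) hβ.le
  rw [div_rpow (by positivity) (by positivity), ← rpow_pow_comm hy,
    mul_rpow_one_div_rpow hβ.ne' (by positivity) hx, ← exp_mul,
    div_le_iff₀ (by positivity)] at key
  have hinv : (β / t) ^ β * (t / β) ^ β = 1 := by
    rw [← mul_rpow (by positivity) (by positivity), div_mul_div_comm, mul_comm β t,
      div_self (by positivity), one_rpow]
  calc x ^ n = ((β / t) ^ β) ^ n * ((t / β) ^ β * x) ^ n := by
        rw [mul_pow, ← mul_assoc, ← mul_pow, hinv, one_pow, one_mul]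
    _ ≤ ((β / t) ^ β) ^ n * (exp (y * β) * n ! ^ β) := by gcongr
    _ = _ := by
      rw [show y * β = t * x ^ (1 / β) by simp only [y]; field_simp]
      ring

lemma exists_exp_le_pow_div_factorial_rpow {β t x : ℝ} (hβ : 0 < β) (ht : 0 ≤ t)
    (hx : 0 ≤ x) : ∃ n : ℕ,
      exp (t * x ^ (1 / β)) ≤ exp β * ((exp 1 * t / β) ^ β) ^ n * x ^ n / (n ! : ℝ) ^ β := by
  set y := t / β * x ^ (1 / β)
  have hy : 0 ≤ y := by positivity
  refine ⟨⌊y⌋₊, ?_⟩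
  have key := rpow_le_rpow (exp_pos y).le (exp_le_exp_one_mul_pow_floor_div_factorial hy) hβ.le
  rw [← exp_mul, div_rpow (by positivity) (by positivity), mul_rpow (by positivity) (by positivity),
    ← rpow_pow_comm (by positivity), ← mul_assoc, mul_rpow_one_div_rpow hβ.ne' (by positivity) hx,
    ← exp_mul, one_mul, mul_pow] at key
  convert key using 2
  · simp only [y]; field_simp
  · rw [mul_div_assoc]; ring

lemma sq_abs_pow (l : ℝ) (n : ℕ) : (|l| ^ n) ^ 2 = l ^ (2 * n) := by
  rw [pow_abs, sq_abs, ← pow_mul, mul_comm]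

theorem exists_lintegral_pow_le_of_lintegral_exp_lt_top {ν : Measure ℝ} {β t : ℝ}
    (hβ : 0 < β) (ht : 0 < t)
    (hI : ∫⁻ l, ENNReal.ofReal (exp (t * |l| ^ (1 / β)) ^ 2) ∂ν < ⊤) :
    ∃ C : ℝ, 0 < C ∧ ∀ n : ℕ, ∫⁻ l, ENNReal.ofReal (l ^ (2 * n)) ∂ν ≤
      ENNReal.ofReal ((C * ((β / t) ^ β) ^ n * (n ! : ℝ) ^ β) ^ 2) := by
  set I := ∫⁻ l, ENNReal.ofReal (exp (t * |l| ^ (1 / β)) ^ 2) ∂ν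
  set C := √I.toReal + 1
  have hIC : I ≤ ENNReal.ofReal (C ^ 2) := by
    rw [← ENNReal.ofReal_toReal hI.ne]
    refine ENNReal.ofReal_le_ofReal ?_
    nlinarith [sq_sqrt (ENNReal.toReal_nonneg (a := I)), sqrt_nonneg I.toReal]
  refine ⟨C, by positivity, fun n => ?_⟩
  set a := ((β / t) ^ β) ^ n * (n ! : ℝ) ^ β
  have hpt : ∀ l : ℝ, ENNReal.ofReal (l ^ (2 * n)) ≤
      ENNReal.ofReal (a ^ 2) * ENNReal.ofReal (exp (t * |l| ^ (1 / β)) ^ 2) := fun l => by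
    rw [← ENNReal.ofReal_mul (sq_nonneg _), ← mul_pow, ← sq_abs_pow]
    exact ENNReal.ofReal_le_ofReal
      (pow_le_pow_left₀ (by positivity) (pow_le_factorial_rpow_mul_exp hβ ht (abs_nonneg l) n) 2)
  calc ∫⁻ l, ENNReal.ofReal (l ^ (2 * n)) ∂ν
      ≤ ∫⁻ l, ENNReal.ofReal (a ^ 2) * ENNReal.ofReal (exp (t * |l| ^ (1 / β)) ^ 2) ∂ν :=
        lintegral_mono hpt
    _ = ENNReal.ofReal (a ^ 2) * I := lintegral_const_mul' _ _ ENNReal.ofReal_ne_top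
    _ ≤ ENNReal.ofReal (a ^ 2) * ENNReal.ofReal (C ^ 2) := by gcongr
    _ = ENNReal.ofReal ((C * a) ^ 2) := by
      rw [← ENNReal.ofReal_mul (sq_nonneg _), ← mul_pow, mul_comm]
    _ = _ := by rw [mul_assoc]

theorem lintegral_exp_lt_top_of_lintegral_pow_le {ν : Measure ℝ} {β t α c : ℝ}
    (hβ : 0 < β) (ht : 0 ≤ t) (hα : 0 ≤ α) (hq : (exp 1 * t / β) ^ β * α < 1)
    (hM : ∀ n : ℕ, ∫⁻ l, ENNReal.ofReal (l ^ (2 * n)) ∂ν ≤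
      ENNReal.ofReal ((c * α ^ n * (n ! : ℝ) ^ β) ^ 2)) :
    ∫⁻ l, ENNReal.ofReal (exp (t * |l| ^ (1 / β)) ^ 2) ∂ν < ⊤ := by
  set κ := (exp 1 * t / β) ^ β
  set q := κ * α
  set K : ℕ → ℝ := fun n => (exp β * κ ^ n / (n ! : ℝ) ^ β) ^ 2
  have hpt : ∀ l : ℝ, ∃ n, exp (t * |l| ^ (1 / β)) ^ 2 ≤ K n * l ^ (2 * n) := fun l => by
    obtain ⟨n, hn⟩ := exists_exp_le_pow_div_factorial_rpow hβ ht (abs_nonneg l)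
    refine ⟨n, ?_⟩
    rw [← sq_abs_pow, ← mul_pow]
    refine pow_le_pow_left₀ (exp_pos _).le (hn.trans_eq ?_) 2
    ring
  have hterm : ∀ n : ℕ, ∫⁻ l, ENNReal.ofReal (K n * l ^ (2 * n)) ∂ν ≤
      ENNReal.ofReal ((exp β * c) ^ 2 * (q ^ 2) ^ n) := fun n => by
    calc ∫⁻ l, ENNReal.ofReal (K n * l ^ (2 * n)) ∂ν
        = ENNReal.ofReal (K n) * ∫⁻ l, ENNReal.ofReal (l ^ (2 * n)) ∂ν := by
          simp_rw [ENNReal.ofReal_mul (show 0 ≤ K n from sq_nonneg _)]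
          exact lintegral_const_mul' _ _ ENNReal.ofReal_ne_top
      _ ≤ ENNReal.ofReal (K n) * ENNReal.ofReal ((c * α ^ n * (n ! : ℝ) ^ β) ^ 2) := by
          gcongr; exact hM n
      _ = _ := by
          rw [← ENNReal.ofReal_mul (sq_nonneg _)]
          congr 1
          simp only [q]
          field_simp
          ring
  have hsum : Summable fun n : ℕ => (exp β * c) ^ 2 * (q ^ 2) ^ n :=
    (summable_geometric_of_lt_one (sq_nonneg q)
      (pow_lt_one₀ (by positivity) hq two_ne_zero)).mul_left _
  calc ∫⁻ l, ENNReal.ofReal (exp (t * |l| ^ (1 / β)) ^ 2) ∂ν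
      ≤ ∫⁻ l, ∑' n, ENNReal.ofReal (K n * l ^ (2 * n)) ∂ν := lintegral_mono fun l => by
        obtain ⟨n, hn⟩ := hpt l
        exact (ENNReal.ofReal_le_ofReal hn).trans (ENNReal.le_tsum n)
    _ = ∑' n, ∫⁻ l, ENNReal.ofReal (K n * l ^ (2 * n)) ∂ν :=
        lintegral_tsum fun n => by fun_prop
    _ ≤ ∑' n : ℕ, ENNReal.ofReal ((exp β * c) ^ 2 * (q ^ 2) ^ n) := ENNReal.tsum_le_tsum hterm
    _ = ENNReal.ofReal (∑' n : ℕ, (exp β * c) ^ 2 * (q ^ 2) ^ n) :=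
        (ENNReal.ofReal_tsum_of_nonneg (fun n => by positivity) hsum).symm
    _ < ⊤ := ENNReal.ofReal_lt_top

namespace IsSpectralMeasureOf

variable {H : Type*} [NormedAddCommGroup H] [InnerProductSpace ℂ H]
  {A : H →ₗ.[ℂ] H} {E : Set ℝ → H →L[ℂ] H} {μ : H → Measure ℝ}

theorem norm_iterSeq_le_iff (hE : IsSpectralMeasureOf A E μ) {f : H} {u : ℕ → H}
    (hu : IterSeq A f u) (n : ℕ) {b : ℝ} (hb : 0 ≤ b) :
    ‖u n‖ ≤ b ↔ ∫⁻ l, ENNReal.ofReal (l ^ (2 * n)) ∂(μ f) ≤ ENNReal.ofReal (b ^ 2) := by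
  rw [← hE.iter_norm f u hu n, ENNReal.ofReal_le_ofReal_iff (by positivity),
    sq_le_sq₀ (norm_nonneg _) hb]

theorem exists_iterSeq_of_lintegral_pow_le (hE : IsSpectralMeasureOf A E μ) {f : H}
    {b : ℕ → ℝ} (h : ∀ n : ℕ, ∫⁻ l, ENNReal.ofReal (l ^ (2 * n)) ∂(μ f) ≤ ENNReal.ofReal (b n)) :
    ∃ u, IterSeq A f u :=
  hE.iter_dom f fun n => (h n).trans_lt ENNReal.ofReal_lt_top

end IsSpectralMeasureOf

theorem gevrey_classes_eq_dom_exp_general (A : X →ₗ.[ℂ] X)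
    (E : Set ℝ → X →L[ℂ] X) (μ : X → Measure ℝ) (hE : IsSpectralMeasureOf A E μ)
    (β : ℝ) (hβ : 0 < β) :
    {f : X | ∃ u : ℕ → X, IterSeq A f u ∧ ∃ α : ℝ, 0 < α ∧ ∃ c : ℝ, 0 < c ∧
        ∀ n : ℕ, ‖u n‖ ≤ c * α ^ n * (Nat.factorial n : ℝ) ^ β} =
      {f : X | ∃ t : ℝ, 0 < t ∧
        MemDom μ (fun l => Real.exp (t * |l| ^ (1 / β))) f} ∧
    {f : X | ∃ u : ℕ → X, IterSeq A f u ∧ ∀ α : ℝ, 0 < α → ∃ c : ℝ, 0 < c ∧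
        ∀ n : ℕ, ‖u n‖ ≤ c * α ^ n * (Nat.factorial n : ℝ) ^ β} =
      {f : X | ∀ t : ℝ, 0 < t →
        MemDom μ (fun l => Real.exp (t * |l| ^ (1 / β))) f} := by
  refine ⟨Set.ext fun f => ⟨?_, ?_⟩, Set.ext fun f => ⟨?_, ?_⟩⟩
  · rintro ⟨u, hu, α, hα, c, hc, hb⟩
    -- `t` is chosen so that `(exp 1 * t / β) ^ β * α = 1 / 2`
    refine ⟨β / (exp 1 * (2 * α) ^ (1 / β)), by positivity,
      lintegral_exp_lt_top_of_lintegral_pow_le hβ (by positivity) hα.le ?_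
        fun n => (hE.norm_iterSeq_le_iff hu n (by positivity)).1 (hb n)⟩
    rw [show exp 1 * (β / (exp 1 * (2 * α) ^ (1 / β))) / β = ((2 * α) ^ (1 / β))⁻¹ by
        field_simp, inv_rpow (by positivity), one_div, rpow_inv_rpow (by positivity) hβ.ne']
    field_simp
    norm_num
  · rintro ⟨t, ht, hmem⟩
    obtain ⟨C, hC, hM⟩ := exists_lintegral_pow_le_of_lintegral_exp_lt_top hβ ht hmem
    obtain ⟨u, hu⟩ := hE.exists_iterSeq_of_lintegral_pow_le hM
    exact ⟨u, hu, _, by positivity, C, hC,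
      fun n => (hE.norm_iterSeq_le_iff hu n (by positivity)).2 (hM n)⟩
  · rintro ⟨u, hu, hb⟩ t ht
    obtain ⟨c, hc, hcb⟩ := hb (1 / (2 * (exp 1 * t / β) ^ β)) (by positivity)
    refine lintegral_exp_lt_top_of_lintegral_pow_le hβ ht.le (by positivity) ?_
      fun n => (hE.norm_iterSeq_le_iff hu n (by positivity)).1 (hcb n)
    field_simp
    norm_num
  · intro hmem
    obtain ⟨_, _, hM₁⟩ :=
      exists_lintegral_pow_le_of_lintegral_exp_lt_top hβ one_pos (hmem 1 one_pos)
    obtain ⟨u, hu⟩ := hE.exists_iterSeq_of_lintegral_pow_le hM₁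
    refine ⟨u, hu, fun α hα => ?_⟩
    obtain ⟨C, hC, hM⟩ := exists_lintegral_pow_le_of_lintegral_exp_lt_top hβ
      (t := β / α ^ (1 / β)) (by positivity) (hmem _ (by positivity))
    rw [div_div_cancel₀ hβ.ne', one_div, rpow_inv_rpow hα.le hβ.ne'] at hM
    exact ⟨C, hC, fun n => (hE.norm_iterSeq_le_iff hu n (by positivity)).2 (hM n)⟩

/-- For a self-adjoint `A` and `β > 0`, the Gevrey classes of order
`β` satisfy `𝓔^{β}(A) = ⋃_{t>0} D(exp(t|A|^(1/β)))` and
`𝓔^(β)(A) = ⋂_{t>0} D(exp(t|A|^(1/β)))`. -/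
theorem gevrey_classes_eq_dom_exp (A : X →ₗ.[ℂ] X) (hsa : IsSelfAdjoint A)
    (E : Set ℝ → X →L[ℂ] X) (μ : X → Measure ℝ) (hE : IsSpectralMeasureOf A E μ)
    (β : ℝ) (hβ : 0 < β) :
    {f : X | ∃ u : ℕ → X, IterSeq A f u ∧ ∃ α : ℝ, 0 < α ∧ ∃ c : ℝ, 0 < c ∧
        ∀ n : ℕ, ‖u n‖ ≤ c * α ^ n * (Nat.factorial n : ℝ) ^ β} =
      {f : X | ∃ t : ℝ, 0 < t ∧
        MemDom μ (fun l => Real.exp (t * |l| ^ (1 / β))) f} ∧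
    {f : X | ∃ u : ℕ → X, IterSeq A f u ∧ ∀ α : ℝ, 0 < α → ∃ c : ℝ, 0 < c ∧
        ∀ n : ℕ, ‖u n‖ ≤ c * α ^ n * (Nat.factorial n : ℝ) ^ β} =
      {f : X | ∀ t : ℝ, 0 < t →
        MemDom μ (fun l => Real.exp (t * |l| ^ (1 / β))) f} :=
  gevrey_classes_eq_dom_exp_general A E μ hE β hβ
end
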